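/- The sequence ln I3(n)/v3(n) converges as n → ∞ to a limit S3, and for every integer m ≥ 1 this limit satisfies (5/(7·6^m))·ln pc(m) + (15/(7·6^m))·ln 2 ≤ S3 ≤ (5/(7·6^m))·ln pd(m) + (15/(7·6^m))·ln 2. -/

import Mathlib

set_option maxRecDepth 4000 in
def pa3Next (pa pb pc pd : ℕ) : ℕ :=
  3*pa^6 + pb^6 + 16*pa^5*pb + 6*pa^5*pc + 2*pa^5*pd + 8*pb^5*pa + 35*pa^4*pb^2
      + 54*pa^4*pc^2 + 6*pa^4*pd^2 + 25*pb^4*pa^2 + 54*pb^4*pc^2 + 6*pb^4*pd^2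
      + 40*pa^3*pb^3 + 108*pa^3*pc^3 + 4*pa^3*pd^3 + 108*pb^3*pc^3 + 4*pb^3*pd^3
      + 24*pa^4*pb*pc + 8*pa^4*pb*pd + 36*pa^4*pc*pd + 6*pb^4*pa*pc + 2*pb^4*pa*pd
      + 36*pb^4*pc*pd + 36*pa^3*pb^2*pc + 12*pa^3*pb^2*pd + 216*pa^3*pc^2*pb
      + 108*pa^3*pc^2*pd + 24*pa^3*pd^2*pb + 36*pa^3*pd^2*pc + 24*pb^3*pa^2*pc
      + 8*pb^3*pa^2*pd + 216*pb^3*pc^2*pa + 108*pb^3*pc^2*pd + 24*pb^3*pd^2*pa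
      + 36*pb^3*pd^2*pc + 324*pc^3*pa^2*pb + 324*pc^3*pb^2*pa + 12*pd^3*pa^2*pb
      + 12*pd^3*pb^2*pa + 324*pa^2*pb^2*pc^2 + 36*pa^2*pb^2*pd^2
      + 144*pa^3*pb*pc*pd + 144*pb^3*pa*pc*pd + 216*pa^2*pb^2*pc*pd
      + 324*pa^2*pc^2*pb*pd + 108*pa^2*pd^2*pb*pc + 324*pb^2*pc^2*pa*pd
      + 108*pb^2*pd^2*pa*pc

set_option maxRecDepth 4000 in
def pb3Next (pa pb pc pd : ℕ) : ℕ :=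
  pa^6 + 3*pb^6 + 8*pa^5*pb + 16*pb^5*pa + 6*pb^5*pc + 2*pb^5*pd + 25*pa^4*pb^2
      + 54*pa^4*pc^2 + 6*pa^4*pd^2 + 35*pb^4*pa^2 + 54*pb^4*pc^2 + 6*pb^4*pd^2
      + 40*pa^3*pb^3 + 108*pa^3*pc^3 + 4*pa^3*pd^3 + 108*pb^3*pc^3 + 4*pb^3*pd^3
      + 6*pa^4*pb*pc + 2*pa^4*pb*pd + 36*pa^4*pc*pd + 24*pb^4*pa*pc + 8*pb^4*pa*pd
      + 36*pb^4*pc*pd + 24*pa^3*pb^2*pc + 8*pa^3*pb^2*pd + 216*pa^3*pc^2*pb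
      + 108*pa^3*pc^2*pd + 24*pa^3*pd^2*pb + 36*pa^3*pd^2*pc + 36*pb^3*pa^2*pc
      + 12*pb^3*pa^2*pd + 216*pb^3*pc^2*pa + 108*pb^3*pc^2*pd + 24*pb^3*pd^2*pa
      + 36*pb^3*pd^2*pc + 324*pc^3*pa^2*pb + 324*pc^3*pb^2*pa + 12*pd^3*pa^2*pb
      + 12*pd^3*pb^2*pa + 324*pa^2*pb^2*pc^2 + 36*pa^2*pb^2*pd^2
      + 144*pa^3*pb*pc*pd + 144*pb^3*pa*pc*pd + 216*pa^2*pb^2*pc*pd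
      + 324*pa^2*pc^2*pb*pd + 108*pa^2*pd^2*pb*pc + 324*pb^2*pc^2*pa*pd
      + 108*pb^2*pd^2*pa*pc

set_option maxRecDepth 4000 in
def pc3Next (pa pb pc pd : ℕ) : ℕ :=
  5832*pc^6 + 8*pd^6 + pa^5*pb + 3*pa^5*pc + pa^5*pd + pb^5*pa + 3*pb^5*pc
      + pb^5*pd + 11664*pc^5*pd + 144*pd^5*pc + 4*pa^4*pb^2 + 4*pb^4*pa^2
      + 9720*pc^4*pd^2 + 1080*pd^4*pc^2 + 6*pa^3*pb^3 + 162*pa^3*pc^3 + 6*pa^3*pd^3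
      + 162*pb^3*pc^3 + 6*pb^3*pd^3 + 4320*pc^3*pd^3 + 21*pa^4*pb*pc + 7*pa^4*pb*pd
      + 21*pb^4*pa*pc + 7*pb^4*pa*pd + 48*pa^3*pb^2*pc + 16*pa^3*pb^2*pd
      + 162*pa^3*pc^2*pd + 54*pa^3*pd^2*pc + 48*pb^3*pa^2*pc + 16*pb^3*pa^2*pd
      + 162*pb^3*pc^2*pd + 54*pb^3*pd^2*pc + 486*pc^3*pa^2*pb + 486*pc^3*pb^2*pa
      + 18*pd^3*pa^2*pb + 18*pd^3*pb^2*pa + 486*pa^2*pc^2*pb*pd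
      + 162*pa^2*pd^2*pb*pc + 486*pb^2*pc^2*pa*pd + 162*pb^2*pd^2*pa*pc

set_option maxRecDepth 4000 in
def pd3Next (pa pb pc pd : ℕ) : ℕ :=
  pa^6 + pb^6 + 5832*pc^6 + 8*pd^6 + 3*pa^5*pb + 9*pa^5*pc + 3*pa^5*pd
      + 3*pb^5*pa + 9*pb^5*pc + 3*pb^5*pd + 11664*pc^5*pd + 144*pd^5*pc
      + 3*pa^4*pb^2 + 3*pb^4*pa^2 + 9720*pc^4*pd^2 + 1080*pd^4*pc^2 + 2*pa^3*pb^3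
      + 162*pa^3*pc^3 + 6*pa^3*pd^3 + 162*pb^3*pc^3 + 6*pb^3*pd^3 + 4320*pc^3*pd^3
      + 27*pa^4*pb*pc + 9*pa^4*pb*pd + 27*pb^4*pa*pc + 9*pb^4*pa*pd
      + 36*pa^3*pb^2*pc + 12*pa^3*pb^2*pd + 162*pa^3*pc^2*pd + 54*pa^3*pd^2*pc
      + 36*pb^3*pa^2*pc + 12*pb^3*pa^2*pd + 162*pb^3*pc^2*pd + 54*pb^3*pd^2*pc
      + 486*pc^3*pa^2*pb + 486*pc^3*pb^2*pa + 18*pd^3*pa^2*pb + 18*pd^3*pb^2*pa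
      + 486*pa^2*pc^2*pb*pd + 162*pa^2*pd^2*pb*pc + 486*pb^2*pc^2*pa*pd
      + 162*pb^2*pd^2*pa*pc

/-- One step of the recursion for the ice-model boundary counts
`(pa, pb, pc, pd)` on the generalized Sierpinski gasket `SG_3(n)`. -/
def ice3Step (pa pb pc pd : ℕ) : ℕ × ℕ × ℕ × ℕ :=
  (pa3Next pa pb pc pd, pb3Next pa pb pc pd, pc3Next pa pb pc pd, pd3Next pa pb pc pd)

/-- The quadruple `(pa_3(n), pb_3(n), pc_3(n), pd_3(n))` on `SG_3(n)`. -/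
def ice3Seq : ℕ → ℕ × ℕ × ℕ × ℕ
  | 0 => (0, 1, 0, 1)
  | n + 1 =>
    ice3Step (ice3Seq n).1 (ice3Seq n).2.1 (ice3Seq n).2.2.1 (ice3Seq n).2.2.2

def pa3 (n : ℕ) : ℕ := (ice3Seq n).1
def pb3 (n : ℕ) : ℕ := (ice3Seq n).2.1
def pc3 (n : ℕ) : ℕ := (ice3Seq n).2.2.1
def pd3 (n : ℕ) : ℕ := (ice3Seq n).2.2.2

/-- The number of ice-model configurations on `SG_3(n)`. -/
def iceI3 (n : ℕ) : ℕ := 6 * pa3 n + 6 * pb3 n + 6 * pc3 n + 2 * pd3 n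

/-- The number of vertices of `SG_3(n)` (the division is exact). -/
def vSG3 (n : ℕ) : ℕ := (7 * 6 ^ n + 8) / 5

/-!
Normalised by the factor `8`, the recursion is a sixth power up to lower-order terms: `pc3Next`
contains `8 (3 pc + pd)^6`, so `(8 pc(n))^6 ≤ 8 pc(n+1)` as soon as `pc ≤ pd`, while
`8 pd(n+1) ≤ (8 pd(n))^6` holds as long as `pa, pb` are small compared with `pc` and
`pd - pc` is not too small compared with `pb`. This is the invariant `IceInv`, which holds from
`n = 2` on. Hence `log (8 pc(n)) / 6^n` increases, `log (8 pd(n)) / 6^n` decreases, and they differ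
by at most `log 2 / 6^n` since `pd ≤ 2 pc`. Their common limit `L` squeezes `log I3(n) / 6^n`, and
`v3(n) ~ (7/5) 6^n` gives `S3 = 5 L / 7`.
-/

open Filter Real Topology

lemma log_div_pow_le_of_pow_le {k : ℕ} (hk : 0 < k) (n : ℕ) {x y : ℝ} (hx : 0 < x)
    (h : x ^ k ≤ y) : log x / k ^ n ≤ log y / k ^ (n + 1) := by
  have hlog : k * log x ≤ log y := by simpa [log_pow] using log_le_log (pow_pos hx k) h
  rw [pow_succ, div_le_div_iff₀ (by positivity) (by positivity)]
  calc log x * (k ^ n * k) = k * log x * k ^ n := by ring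
    _ ≤ log y * k ^ n := by gcongr

lemma log_div_pow_succ_le_of_le_pow {k : ℕ} (hk : 0 < k) (n : ℕ) {x y : ℝ} (hy : 0 < y)
    (h : y ≤ x ^ k) : log y / k ^ (n + 1) ≤ log x / k ^ n := by
  have hlog : log y ≤ k * log x := by simpa [log_pow] using log_le_log hy h
  rw [pow_succ, div_le_div_iff₀ (by positivity) (by positivity)]
  calc log y * k ^ n ≤ k * log x * k ^ n := by gcongr
    _ = log x * (k ^ n * k) := by ring

theorem exists_tendsto_of_monotone_of_antitone {lo up : ℕ → ℝ} (hlo : Monotone lo)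
    (hup : Antitone up) (h : Tendsto (fun n => up n - lo n) atTop (𝓝 0)) :
    ∃ L, Tendsto lo atTop (𝓝 L) ∧ Tendsto up atTop (𝓝 L) ∧ ∀ n, lo n ≤ L ∧ L ≤ up n := by
  have hanti : Antitone fun n => up n - lo n := fun m n hmn => by
    linarith [hlo hmn, hup hmn]
  have hle (n : ℕ) : lo n ≤ up n := sub_nonneg.1 (hanti.le_of_tendsto h n)
  have hlo_lim := tendsto_atTop_ciSup hlo
    ⟨up 0, by rintro _ ⟨n, rfl⟩; exact (hle n).trans (hup n.zero_le)⟩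
  have hup_lim : Tendsto up atTop (𝓝 (⨆ n, lo n)) := by
    simpa using hlo_lim.add h
  exact ⟨_, hlo_lim, hup_lim, fun n => ⟨hlo.ge_of_tendsto hlo_lim n, hup.le_of_tendsto hup_lim n⟩⟩

lemma tendsto_const_div_six_pow (C : ℝ) : Tendsto (fun n : ℕ => C / 6 ^ n) atTop (𝓝 0) :=
  tendsto_const_nhds.div_atTop (tendsto_pow_atTop_atTop_of_one_lt (by norm_num))

namespace SG3Ice

section StepBounds

variable {a b c d : ℕ}

/- The inequalities closed by `positivity` below say, after writing `b = a + e`, `c = b + f`,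
`d = c + k`, that a polynomial in the new variables has nonnegative coefficients. -/

lemma eight_mul_pow_le_pc3Next : 8 * (3 * c + d) ^ 6 ≤ pc3Next a b c d := by
  unfold pc3Next
  zify
  rw [← sub_nonneg]
  ring_nf
  positivity

lemma pc3Next_ge (hcd : c ≤ d) : 32768 * c ^ 6 ≤ pc3Next a b c d :=
  calc 32768 * c ^ 6 = 8 * (3 * c + c) ^ 6 := by ring
    _ ≤ 8 * (3 * c + d) ^ 6 := by gcongr
    _ ≤ pc3Next a b c d := eight_mul_pow_le_pc3Next

lemma pd3Next_eq (hab : a ≤ b) :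
    pd3Next a b c d = pc3Next a b c d + (b - a) ^ 2 * (a + b) ^ 3 * (a + b + 6 * c + 2 * d) := by
  obtain ⟨e, rfl⟩ := Nat.exists_eq_add_of_le hab
  rw [Nat.add_sub_cancel_left]
  unfold pc3Next pd3Next
  ring

lemma pc3Next_add_le_pd3Next (hab : a ≤ b) :
    pc3Next a b c d + 6 * c * (b - a) ^ 2 * b ^ 3 ≤ pd3Next a b c d := by
  rw [pd3Next_eq hab]
  refine Nat.add_le_add_left ?_ _
  calc 6 * c * (b - a) ^ 2 * b ^ 3 = (b - a) ^ 2 * b ^ 3 * (6 * c) := by ring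
    _ ≤ (b - a) ^ 2 * (a + b) ^ 3 * (a + b + 6 * c + 2 * d) := by gcongr <;> omega

lemma pa3Next_add_le_pb3Next (hab : a ≤ b) :
    pa3Next a b c d + 6 * c * (b - a) * b ^ 4 ≤ pb3Next a b c d := by
  obtain ⟨e, rfl⟩ := Nat.exists_eq_add_of_le hab
  rw [Nat.add_sub_cancel_left]
  unfold pa3Next pb3Next
  zify
  rw [← sub_nonneg]
  ring_nf
  positivity

lemma pb3Next_le (hab : a ≤ b) (hbc : b ≤ c) (hcd : c ≤ d) :
    pb3Next a b c d ≤ 3840 * b ^ 3 * d ^ 3 := by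
  obtain ⟨e, rfl⟩ := Nat.exists_eq_add_of_le hab
  obtain ⟨f, rfl⟩ := Nat.exists_eq_add_of_le hbc
  obtain ⟨k, rfl⟩ := Nat.exists_eq_add_of_le hcd
  unfold pb3Next
  zify
  rw [← sub_nonneg]
  ring_nf
  positivity

lemma pd3Next_le (hab : a ≤ b) (hbc : b ≤ c) (hcd : c ≤ d) :
    pd3Next a b c d ≤ 8 * (3 * c + d) ^ 6 + 3280 * b ^ 3 * d ^ 3 := by
  obtain ⟨e, rfl⟩ := Nat.exists_eq_add_of_le hab
  obtain ⟨f, rfl⟩ := Nat.exists_eq_add_of_le hbc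
  obtain ⟨k, rfl⟩ := Nat.exists_eq_add_of_le hcd
  unfold pd3Next
  zify
  rw [← sub_nonneg]
  ring_nf
  positivity

-- Convexity: `8 (4d)^6 - 8 (3c + d)^6 ≥ 8 · 6 (3c + d)^5 · 3 (d - c) ≥ 144 (4c)^5 (d - c)`.
lemma eight_mul_pow_add_le (hcd : c ≤ d) :
    8 * (3 * c + d) ^ 6 + 147456 * c ^ 5 * (d - c) ≤ 32768 * d ^ 6 := by
  obtain ⟨k, rfl⟩ := Nat.exists_eq_add_of_le hcd
  rw [Nat.add_sub_cancel_left]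
  zify
  rw [← sub_nonneg]
  ring_nf
  positivity

end StepBounds

/- `gap_cd` is what makes `pd` decay (`IceInv.pd3Next_le`), and `gap_ab` is what lets
`gap_cd` propagate. -/
structure IceInv (a b c d : ℕ) : Prop where
  lt : a < b
  four_mul_le : 4 * b ≤ c
  le : c ≤ d
  ratio : 100 * d ≤ 101 * c
  gap_cd : b ^ 3 ≤ 32 * c ^ 2 * (d - c)
  gap_ab : b ^ 6 ≤ 3 * c ^ 4 * (b - a) ^ 2

namespace IceInv

variable {a b c d : ℕ}

lemma cube_le (h : IceInv a b c d) : 1000000 * d ^ 3 ≤ 1030301 * c ^ 3 := by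
  have := Nat.pow_le_pow_left h.ratio 3
  ring_nf at this ⊢
  exact this

lemma pb3Next_le (h : IceInv a b c d) : pb3Next a b c d ≤ 4000 * b ^ 3 * c ^ 3 := by
  have := SG3Ice.pb3Next_le h.lt.le (by linarith [h.four_mul_le]) h.le
  linarith [Nat.mul_le_mul_left (3840 * b ^ 3) h.cube_le, Nat.zero_le (b ^ 3 * c ^ 3)]

lemma pd3Next_le (h : IceInv a b c d) : pd3Next a b c d ≤ 32768 * d ^ 6 := by
  have := SG3Ice.pd3Next_le h.lt.le (by linarith [h.four_mul_le]) h.le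
  have hconv := eight_mul_pow_add_le h.le
  have hbd : 3280 * b ^ 3 * d ^ 3 ≤ 147456 * c ^ 5 * (d - c) :=
    calc 3280 * b ^ 3 * d ^ 3 ≤ 3380 * b ^ 3 * c ^ 3 := by
          linarith [Nat.mul_le_mul_left (3280 * b ^ 3) h.cube_le, Nat.zero_le (b ^ 3 * c ^ 3)]
      _ ≤ 3380 * (32 * c ^ 2 * (d - c)) * c ^ 3 := by gcongr; exact h.gap_cd
      _ ≤ 147456 * c ^ 5 * (d - c) := by ring_nf; omega
  omega

lemma gap_cd_next (h : IceInv a b c d) {B C D : ℕ} (hB : B ≤ 4000 * b ^ 3 * c ^ 3)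
    (hC : 32768 * c ^ 6 ≤ C) (hCD : 6 * c * (b - a) ^ 2 * b ^ 3 ≤ D - C) :
    B ^ 3 ≤ 32 * C ^ 2 * (D - C) :=
  calc B ^ 3 ≤ (4000 * b ^ 3 * c ^ 3) ^ 3 := by gcongr
    _ = 4000 ^ 3 * (b ^ 3 * c ^ 9) * b ^ 6 := by ring
    _ ≤ 4000 ^ 3 * (b ^ 3 * c ^ 9) * (3 * c ^ 4 * (b - a) ^ 2) := by gcongr; exact h.gap_ab
    _ = (3 * 4000 ^ 3) * (c ^ 13 * (b - a) ^ 2 * b ^ 3) := by ring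
    _ ≤ (192 * 2 ^ 30) * (c ^ 13 * (b - a) ^ 2 * b ^ 3) := Nat.mul_le_mul_right _ (by norm_num)
    _ = 32 * (32768 * c ^ 6) ^ 2 * (6 * c * (b - a) ^ 2 * b ^ 3) := by ring
    _ ≤ 32 * C ^ 2 * (D - C) := by gcongr

lemma gap_ab_next (h : IceInv a b c d) {A B C : ℕ} (hB : B ≤ 4000 * b ^ 3 * c ^ 3)
    (hC : 32768 * c ^ 6 ≤ C) (hAB : 6 * c * (b - a) * b ^ 4 ≤ B - A) :
    B ^ 6 ≤ 3 * C ^ 4 * (B - A) ^ 2 := by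
  refine Nat.le_of_mul_le_mul_left ?_ (show 0 < 256 by norm_num)
  calc 256 * B ^ 6 ≤ 256 * (4000 * b ^ 3 * c ^ 3) ^ 6 := by gcongr
    _ = 4000 ^ 6 * (b ^ 8 * c ^ 18) * (b ^ 6 * (4 * b) ^ 4) := by ring
    _ ≤ 4000 ^ 6 * (b ^ 8 * c ^ 18) * ((3 * c ^ 4 * (b - a) ^ 2) * c ^ 4) := by
        gcongr
        · exact h.gap_ab
        · exact h.four_mul_le
    _ = (3 * 4000 ^ 6) * (c ^ 26 * (b - a) ^ 2 * b ^ 8) := by ring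
    _ ≤ (256 * 108 * 2 ^ 60) * (c ^ 26 * (b - a) ^ 2 * b ^ 8) :=
        Nat.mul_le_mul_right _ (by norm_num)
    _ = 256 * (3 * (32768 * c ^ 6) ^ 4 * (6 * c * (b - a) * b ^ 4) ^ 2) := by ring
    _ ≤ 256 * (3 * C ^ 4 * (B - A) ^ 2) := by gcongr

lemma next (h : IceInv a b c d) :
    IceInv (pa3Next a b c d) (pb3Next a b c d) (pc3Next a b c d) (pd3Next a b c d) := by
  have hAB := pa3Next_add_le_pb3Next (c := c) (d := d) h.lt.le
  have hB := h.pb3Next_le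
  have hC := pc3Next_ge (a := a) (b := b) h.le
  have hCD := pc3Next_add_le_pd3Next (c := c) (d := d) h.lt.le
  have hD := pd3Next_eq (c := c) (d := d) h.lt.le
  have hc3 : 64 * b ^ 3 ≤ c ^ 3 := by
    simpa [mul_pow] using Nat.pow_le_pow_left h.four_mul_le 3
  have hgap :
      (b - a) ^ 2 * (a + b) ^ 3 * (a + b + 6 * c + 2 * d) ≤ c ^ 2 * c ^ 3 * (11 * c) := by
    have := h.lt
    have := h.ratio
    have := h.four_mul_le
    gcongr <;> omega
  refine ⟨?_, ?_, by omega, ?_, h.gap_cd_next hB hC (by omega), h.gap_ab_next hB hC (by omega)⟩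
  · have hb : 0 < b := by have := h.lt; omega
    have hpos : 0 < 6 * c * (b - a) * b ^ 4 :=
      Nat.mul_pos (Nat.mul_pos (by have := h.four_mul_le; omega) (Nat.sub_pos_of_lt h.lt))
        (pow_pos hb 4)
    omega
  · nlinarith [Nat.mul_le_mul_right (c ^ 3) hc3, Nat.zero_le (c ^ 6)]
  · nlinarith [Nat.zero_le (c ^ 6)]

end IceInv

lemma ice3Seq_two : ice3Seq 2 = (29665405536, 29990772448, 527746306872, 527789051704) := by
  rfl

lemma iceInv_add_two (n : ℕ) : IceInv (pa3 (n + 2)) (pb3 (n + 2)) (pc3 (n + 2)) (pd3 (n + 2)) := by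
  induction n with
  | zero =>
    simp only [pa3, pb3, pc3, pd3, zero_add, ice3Seq_two]
    constructor <;> norm_num
  | succ n ih => exact ih.next

lemma pc3_pos {n : ℕ} (hn : 1 ≤ n) : 0 < pc3 n := by
  match n, hn with
  | 1, _ => decide
  | k + 2, _ =>
    have h := iceInv_add_two k
    have := h.lt
    have := h.four_mul_le
    omega

lemma pc3_le_pd3 {n : ℕ} (hn : 1 ≤ n) : pc3 n ≤ pd3 n := by
  match n, hn with
  | 1, _ => decide
  | k + 2, _ => exact (iceInv_add_two k).le

lemma pd3_le_two_mul_pc3 {n : ℕ} (hn : 1 ≤ n) : pd3 n ≤ 2 * pc3 n := by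
  match n, hn with
  | 1, _ => decide
  | k + 2, _ => have := (iceInv_add_two k).ratio; omega

lemma iceI3_le {n : ℕ} (hn : 1 ≤ n) : iceI3 n ≤ 32 * pd3 n := by
  match n, hn with
  | 1, _ => decide
  | k + 2, _ =>
    have h := iceInv_add_two k
    have := h.lt
    have := h.four_mul_le
    have := h.le
    unfold iceI3
    omega

lemma two_mul_pc3_le_iceI3 (n : ℕ) : 2 * pc3 n ≤ iceI3 n := by
  unfold iceI3; omega

lemma pc3_growth {n : ℕ} (hn : 1 ≤ n) : (8 * pc3 n) ^ 6 ≤ 8 * pc3 (n + 1) := by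
  have : 32768 * pc3 n ^ 6 ≤ pc3 (n + 1) := pc3Next_ge (pc3_le_pd3 hn)
  rw [mul_pow]
  omega

lemma pd3_decay {n : ℕ} (hn : 1 ≤ n) : 8 * pd3 (n + 1) ≤ (8 * pd3 n) ^ 6 := by
  rw [mul_pow]
  match n, hn with
  | 1, _ => decide
  | k + 2, _ =>
    have : pd3 (k + 2 + 1) ≤ 32768 * pd3 (k + 2) ^ 6 := (iceInv_add_two k).pd3Next_le
    omega

noncomputable def lowerRate (n : ℕ) : ℝ := log (8 * pc3 n) / 6 ^ n

noncomputable def upperRate (n : ℕ) : ℝ := log (8 * pd3 n) / 6 ^ n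

lemma lowerRate_le_succ {n : ℕ} (hn : 1 ≤ n) : lowerRate n ≤ lowerRate (n + 1) := by
  have := pc3_pos hn
  refine log_div_pow_le_of_pow_le (by norm_num) n (by positivity) ?_
  exact_mod_cast pc3_growth hn

lemma upperRate_succ_le {n : ℕ} (hn : 1 ≤ n) : upperRate (n + 1) ≤ upperRate n := by
  have := (pc3_pos (by omega : 1 ≤ n + 1)).trans_le (pc3_le_pd3 (by omega))
  refine log_div_pow_succ_le_of_le_pow (by norm_num) n (by positivity) ?_
  exact_mod_cast pd3_decay hn

lemma lowerRate_le_upperRate {n : ℕ} (hn : 1 ≤ n) : lowerRate n ≤ upperRate n := by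
  have := pc3_pos hn
  unfold lowerRate upperRate
  gcongr
  exact_mod_cast pc3_le_pd3 hn

lemma upperRate_le_lowerRate_add {n : ℕ} (hn : 1 ≤ n) :
    upperRate n ≤ lowerRate n + log 2 / 6 ^ n := by
  have := pc3_pos hn
  have := (pc3_pos hn).trans_le (pc3_le_pd3 hn)
  have := pd3_le_two_mul_pc3 hn
  unfold lowerRate upperRate
  rw [← add_div, ← log_mul (by positivity) (by positivity)]
  refine div_le_div_of_nonneg_right (log_le_log (by positivity) ?_) (by positivity)
  exact_mod_cast (by omega : 8 * pd3 n ≤ 8 * pc3 n * 2)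

lemma tendsto_upperRate_sub_lowerRate :
    Tendsto (fun n => upperRate (n + 1) - lowerRate (n + 1)) atTop (𝓝 0) := by
  refine squeeze_zero (fun n => sub_nonneg.2 (lowerRate_le_upperRate (Nat.le_add_left 1 n)))
    (fun n => ?_) ((tendsto_const_div_six_pow (log 2)).comp (tendsto_add_atTop_nat 1))
  have := upperRate_le_lowerRate_add (Nat.le_add_left 1 n)
  simp only [Function.comp_apply]
  linarith

lemma lowerRate_sub_le_log_iceI3 {n : ℕ} (hn : 1 ≤ n) :
    lowerRate n - log 4 / 6 ^ n ≤ log (iceI3 n) / 6 ^ n := by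
  have := pc3_pos hn
  unfold lowerRate
  rw [← sub_div, ← log_div (by positivity) (by norm_num)]
  gcongr
  have : (2 * pc3 n : ℝ) ≤ iceI3 n := by exact_mod_cast two_mul_pc3_le_iceI3 n
  linarith

lemma log_iceI3_le_upperRate_add {n : ℕ} (hn : 1 ≤ n) :
    log (iceI3 n) / 6 ^ n ≤ upperRate n + log 4 / 6 ^ n := by
  have := pc3_pos hn
  have := (pc3_pos hn).trans_le (pc3_le_pd3 hn)
  have hI : (0 : ℝ) < iceI3 n := by exact_mod_cast (two_mul_pc3_le_iceI3 n).trans_lt' (by omega)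
  unfold upperRate
  rw [← add_div, ← log_mul (by positivity) (by norm_num)]
  gcongr
  have : (iceI3 n : ℝ) ≤ 32 * pd3 n := by exact_mod_cast iceI3_le hn
  linarith

lemma vSG3_cast (n : ℕ) : (vSG3 n : ℝ) = (7 * 6 ^ n + 8) / 5 := by
  have h6 : 6 ^ n % 5 = 1 := by simp [Nat.pow_mod]
  have h5 : 5 ∣ 7 * 6 ^ n + 8 := by omega
  rw [vSG3, Nat.cast_div h5 (by norm_num)]
  push_cast
  ring

lemma tendsto_vSG3_div_six_pow : Tendsto (fun n => (vSG3 n : ℝ) / 6 ^ n) atTop (𝓝 (7 / 5)) := by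
  have h := (tendsto_const_div_six_pow (8 / 5)).const_add (7 / 5)
  rw [add_zero] at h
  refine h.congr fun n => ?_
  rw [vSG3_cast]
  field_simp

lemma tendsto_log_iceI3_div_vSG3 {L : ℝ}
    (hlo : Tendsto (fun n => lowerRate (n + 1)) atTop (𝓝 L))
    (hup : Tendsto (fun n => upperRate (n + 1)) atTop (𝓝 L)) :
    Tendsto (fun n => log (iceI3 n) / (vSG3 n : ℝ)) atTop (𝓝 (L / (7 / 5))) := by
  have hsmall := (tendsto_const_div_six_pow (log 4)).comp (tendsto_add_atTop_nat 1)
  have hrate : Tendsto (fun n => log (iceI3 (n + 1)) / 6 ^ (n + 1)) atTop (𝓝 L) := by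
    refine tendsto_of_tendsto_of_tendsto_of_le_of_le (by simpa using hlo.sub hsmall)
      (by simpa using hup.add hsmall) (fun n => ?_) (fun n => ?_)
    · exact lowerRate_sub_le_log_iceI3 (Nat.le_add_left 1 n)
    · exact log_iceI3_le_upperRate_add (Nat.le_add_left 1 n)
  rw [← tendsto_add_atTop_iff_nat 1]
  refine (hrate.div (tendsto_vSG3_div_six_pow.comp (tendsto_add_atTop_nat 1)) (by norm_num)).congr
    fun n => ?_
  exact div_div_div_cancel_right₀ (by positivity) _ _

lemma lowerRate_div {n : ℕ} (hn : 1 ≤ n) :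
    lowerRate n / (7 / 5) = 5 / (7 * 6 ^ n) * log (pc3 n) + 15 / (7 * 6 ^ n) * log 2 := by
  have := pc3_pos hn
  rw [lowerRate, log_mul (by norm_num) (by positivity), show (8 : ℝ) = 2 ^ 3 by norm_num, log_pow]
  field_simp
  ring

lemma upperRate_div {n : ℕ} (hn : 1 ≤ n) :
    upperRate n / (7 / 5) = 5 / (7 * 6 ^ n) * log (pd3 n) + 15 / (7 * 6 ^ n) * log 2 := by
  have := (pc3_pos hn).trans_le (pc3_le_pd3 hn)
  rw [upperRate, log_mul (by norm_num) (by positivity), show (8 : ℝ) = 2 ^ 3 by norm_num, log_pow]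
  field_simp
  ring

end SG3Ice

open SG3Ice in
theorem stmt_18 :
    ∃ S3 : ℝ, Filter.Tendsto (fun n => Real.log (iceI3 n) / (vSG3 n : ℝ))
        Filter.atTop (nhds S3) ∧
      ∀ m : ℕ, 1 ≤ m →
        5 / (7 * (6 : ℝ) ^ m) * Real.log (pc3 m) +
            15 / (7 * (6 : ℝ) ^ m) * Real.log 2 ≤ S3 ∧
        S3 ≤ 5 / (7 * (6 : ℝ) ^ m) * Real.log (pd3 m) +
            15 / (7 * (6 : ℝ) ^ m) * Real.log 2 := by
  obtain ⟨L, hlo, hup, hL⟩ := exists_tendsto_of_monotone_of_antitone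
    (lo := fun n => lowerRate (n + 1)) (up := fun n => upperRate (n + 1))
    (monotone_nat_of_le_succ fun n => lowerRate_le_succ (Nat.le_add_left 1 n))
    (antitone_nat_of_succ_le fun n => upperRate_succ_le (Nat.le_add_left 1 n))
    tendsto_upperRate_sub_lowerRate
  refine ⟨L / (7 / 5), tendsto_log_iceI3_div_vSG3 hlo hup, fun m hm => ?_⟩
  obtain ⟨n, rfl⟩ := Nat.exists_eq_add_of_le' hm
  rw [← lowerRate_div hm, ← upperRate_div hm]
  exact ⟨by gcongr; exact (hL n).1, by gcongr; exact (hL n).2⟩
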